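/- Let φ : ℝ → ℝ be even, C⁴ on ℝ∖{0}, and satisfy assumptions (A1)–(A2) with α ∈ (0,2) and a₀ ≤ 1/2. Then the periodic influence function φ^S(x) := ∑_{k∈ℤ} φ(x+k) satisfies |φ^S(x)| ≤ c₃ for all r₀ ≤ |x| ≤ 1/2, where r₀ := min{a₀, (6c₁c₂)^{−1/(1+α)}} and c₃ := c₁ r₀^{−(1+α)} + c₂(1 + a₀^{−1}). -/

import Mathlib

open Real MeasureTheory Filter Set Topology

noncomputable section

/-- Principal-value Lévy operator: (𝓛 f)(x) = p.v. ∫ φ(x-y)(f(x)-f(y)) dy. -/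
def levy (φ f : ℝ → ℝ) (x : ℝ) : ℝ :=
  limUnder (nhdsWithin (0:ℝ) (Set.Ioi 0))
    (fun ε => ∫ y in {y : ℝ | ε ≤ |x - y|}, φ (x - y) * (f x - f y))

/-- Principal-value alignment force. -/
def alignForce (φ ρ u : ℝ → ℝ) (x : ℝ) : ℝ :=
  limUnder (nhdsWithin (0:ℝ) (Set.Ioi 0))
    (fun ε => ∫ y in {y : ℝ | ε ≤ |x - y|}, φ (x - y) * (u y - u x) * ρ y)

/-- Periodization -/
def phiS (φ : ℝ → ℝ) (x : ℝ) : ℝ := ∑' k : ℤ, φ (x + (k : ℝ))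

def supNorm (f : ℝ → ℝ) : ℝ := ⨆ x : ℝ, |f x|

structure A12 (φ : ℝ → ℝ) (α a₀ c₁ c₂ : ℝ) : Prop where
  αpos : 0 < α
  αlt : α < 2
  a₀pos : 0 < a₀
  a₀le : a₀ ≤ 1/2
  c₁ge : 1 ≤ c₁
  c₂pos : 0 < c₂
  even : ∀ x : ℝ, φ (-x) = φ x
  smooth : ContDiffOn ℝ 4 φ {(0:ℝ)}ᶜ
  lower : ∀ x : ℝ, x ≠ 0 → |x| ≤ a₀ → c₁⁻¹ * |x| ^ (-(1+α)) ≤ φ x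
  upper : ∀ x : ℝ, x ≠ 0 → |x| ≤ a₀ → φ x ≤ c₁ * |x| ^ (-(1+α))
  derivBound : ∀ j : ℕ, 1 ≤ j → j ≤ 4 → ∀ x : ℝ, x ≠ 0 → |x| ≤ a₀ →
    |iteratedDeriv j φ x| ≤ c₁ * |x| ^ (-(1+(j:ℝ)+α))
  mono : ∀ r s : ℝ, 0 < r → r ≤ s → s ≤ a₀ → φ s ≤ φ r
  tailInt : ∀ j : ℕ, j ≤ 4 →
    IntegrableOn (fun x : ℝ => |x| ^ (j:ℝ) * |iteratedDeriv j φ x|) {x : ℝ | a₀ ≤ |x|}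
  tailBound : ∀ j : ℕ, j ≤ 4 →
    (∫ x in {x : ℝ | a₀ ≤ |x|}, |x| ^ (j:ℝ) * |iteratedDeriv j φ x|) ≤ c₂

structure EASol (φ : ℝ → ℝ) (T : ℝ) (ρ u : ℝ → ℝ → ℝ) : Prop where
  smooth_rho : ContDiffOn ℝ (⊤ : ℕ∞) (Function.uncurry ρ) (Set.univ ×ˢ Set.Icc 0 T)
  smooth_u : ContDiffOn ℝ (⊤ : ℕ∞) (Function.uncurry u) (Set.univ ×ˢ Set.Icc 0 T)
  periodic_rho : ∀ x t, ρ (x + 1) t = ρ x t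
  periodic_u : ∀ x t, u (x + 1) t = u x t
  mass : ∀ x : ℝ, ∀ t ∈ Set.Icc 0 T,
    derivWithin (fun s => ρ x s) (Set.Icc 0 T) t + deriv (fun y => ρ y t * u y t) x = 0
  mom : ∀ x : ℝ, ∀ t ∈ Set.Icc 0 T,
    derivWithin (fun s => u x s) (Set.Icc 0 T) t + u x t * deriv (fun y => u y t) x
      = alignForce φ (fun y => ρ y t) (fun y => u y t) x

section Stmt2Aux

namespace S2

variable {φ : ℝ → ℝ} {α a₀ c₁ c₂ : ℝ}

lemma hasDerivAt_of (h : A12 φ α a₀ c₁ c₂) {t : ℝ} (ht : t ≠ 0) :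
    HasDerivAt φ (deriv φ t) t := by
  have hd : DifferentiableOn ℝ φ {(0:ℝ)}ᶜ := h.smooth.differentiableOn (by norm_num)
  exact (hd.differentiableAt (isOpen_compl_singleton.mem_nhds ht)).hasDerivAt

lemma contOn_deriv (h : A12 φ α a₀ c₁ c₂) : ContinuousOn (deriv φ) {(0:ℝ)}ᶜ :=
  (h.smooth.deriv_of_isOpen (m := 3) isOpen_compl_singleton (by norm_num)).continuousOn

lemma contOn_phi (h : A12 φ α a₀ c₁ c₂) : ContinuousOn φ {(0:ℝ)}ᶜ :=
  h.smooth.continuousOn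

lemma meas_tail : MeasurableSet {x : ℝ | a₀ ≤ |x|} := by
  exact measurableSet_le measurable_const continuous_abs.measurable

lemma tail_subset (h : A12 φ α a₀ c₁ c₂) : {x : ℝ | a₀ ≤ |x|} ⊆ {(0:ℝ)}ᶜ := by
  intro t ht
  simp only [mem_setOf_eq] at ht
  simp only [mem_compl_iff, mem_singleton_iff]
  intro h0; rw [h0] at ht; simp at ht; linarith [h.a₀pos]

lemma int_abs_phi (h : A12 φ α a₀ c₁ c₂) :
    IntegrableOn (fun t => |φ t|) {x : ℝ | a₀ ≤ |x|} := by
  have := h.tailInt 0 (by norm_num)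
  refine this.congr_fun (fun t ht => ?_) meas_tail
  simp [iteratedDeriv_zero]

lemma int_abs_deriv (h : A12 φ α a₀ c₁ c₂) :
    IntegrableOn (fun t => |deriv φ t|) {x : ℝ | a₀ ≤ |x|} := by
  have h1 := h.tailInt 1 (by norm_num)
  refine Integrable.mono' (h1.const_mul a₀⁻¹) ?_ ?_
  · exact ((contOn_deriv h).mono (tail_subset h)).norm.aestronglyMeasurable meas_tail
  · refine (ae_restrict_iff' meas_tail).2 (ae_of_all _ fun t ht => ?_)
    simp only [mem_setOf_eq] at ht
    have ht0 : (0:ℝ) < a₀ := h.a₀pos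
    have : |t| ^ ((1:ℕ):ℝ) = |t| := by norm_num
    rw [Real.norm_eq_abs, abs_abs, this, iteratedDeriv_one]
    have h2 : |deriv φ t| * a₀ ≤ |deriv φ t| * |t| :=
      mul_le_mul_of_nonneg_left ht (abs_nonneg _)
    have ha : (0:ℝ) < a₀ := h.a₀pos
    calc |deriv φ t| = a₀⁻¹ * (|deriv φ t| * a₀) := by field_simp
      _ ≤ a₀⁻¹ * (|t| * |deriv φ t|) := by
          rw [mul_comm |t| _]; exact mul_le_mul_of_nonneg_left h2 (by positivity)

lemma intbd_abs_phi (h : A12 φ α a₀ c₁ c₂) :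
    (∫ t in {x : ℝ | a₀ ≤ |x|}, |φ t|) ≤ c₂ := by
  have := h.tailBound 0 (by norm_num)
  calc (∫ t in {x : ℝ | a₀ ≤ |x|}, |φ t|)
      = ∫ t in {x : ℝ | a₀ ≤ |x|}, |t| ^ ((0:ℕ):ℝ) * |iteratedDeriv 0 φ t| := by
        refine setIntegral_congr_fun meas_tail fun t ht => ?_
        simp [iteratedDeriv_zero]
    _ ≤ c₂ := this

lemma intbd_abs_deriv (h : A12 φ α a₀ c₁ c₂) :
    (∫ t in {x : ℝ | a₀ ≤ |x|}, |deriv φ t|) ≤ a₀⁻¹ * c₂ := by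
  have h1 := h.tailInt 1 (by norm_num)
  have step : (∫ t in {x : ℝ | a₀ ≤ |x|}, |deriv φ t|)
      ≤ ∫ t in {x : ℝ | a₀ ≤ |x|}, a₀⁻¹ * (|t| ^ ((1:ℕ):ℝ) * |iteratedDeriv 1 φ t|) := by
    refine setIntegral_mono_on (int_abs_deriv h) (h1.const_mul _) meas_tail fun t ht => ?_
    simp only [mem_setOf_eq] at ht
    have : |t| ^ ((1:ℕ):ℝ) = |t| := by norm_num
    rw [this, iteratedDeriv_one]
    have h2 : |deriv φ t| * a₀ ≤ |deriv φ t| * |t| :=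
      mul_le_mul_of_nonneg_left ht (abs_nonneg _)
    have ha : (0:ℝ) < a₀ := h.a₀pos
    calc |deriv φ t| = a₀⁻¹ * (|deriv φ t| * a₀) := by field_simp
      _ ≤ a₀⁻¹ * (|t| * |deriv φ t|) := by
          rw [mul_comm |t| _]; exact mul_le_mul_of_nonneg_left h2 (by positivity)
  rw [integral_const_mul] at step
  have ha : (0:ℝ) < a₀ := h.a₀pos
  exact step.trans (mul_le_mul_of_nonneg_left (h.tailBound 1 (by norm_num))
    (by positivity))


lemma ftc (h : A12 φ α a₀ c₁ c₂) {z y : ℝ} (hzy : z ≤ y) (hsub : Icc z y ⊆ {(0:ℝ)}ᶜ) :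
    |φ y - φ z| ≤ ∫ t in Ioc z y, |deriv φ t| := by
  have heq : ∫ t in z..y, deriv φ t = φ y - φ z := by
    apply intervalIntegral.integral_eq_sub_of_hasDerivAt
    · intro t ht; rw [uIcc_of_le hzy] at ht; exact hasDerivAt_of h (hsub ht)
    · apply ContinuousOn.intervalIntegrable
      exact (contOn_deriv h).mono (by rw [uIcc_of_le hzy]; exact hsub)
  rw [← heq, ← intervalIntegral.integral_of_le (f := fun t => |deriv φ t|) hzy]
  have h2 := intervalIntegral.norm_integral_le_integral_norm (f := deriv φ) (μ := volume) hzy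
  simpa using h2

lemma interval_bound (h : A12 φ α a₀ c₁ c₂) {m : ℝ} (hm : a₀ ≤ m ∨ m + 1 ≤ -a₀)
    {y : ℝ} (hy : y ∈ Icc m (m+1)) :
    |φ y| ≤ ∫ t in Icc m (m+1), (|φ t| + |deriv φ t|) := by
  have ha : (0:ℝ) < a₀ := h.a₀pos
  have hIsub : Icc m (m+1) ⊆ {x : ℝ | a₀ ≤ |x|} := by
    intro t ht; rcases hm with hm|hm
    · have := ht.1; simp only [mem_setOf_eq]; rw [abs_of_pos (by linarith)]; linarith
    · have := ht.2; simp only [mem_setOf_eq]; rw [abs_of_neg (by linarith)]; linarith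
  have hI0 : Icc m (m+1) ⊆ {(0:ℝ)}ᶜ := hIsub.trans (tail_subset h)
  set C := ∫ t in Icc m (m+1), |deriv φ t| with hC
  have hintD : IntegrableOn (fun t => |deriv φ t|) (Icc m (m+1)) :=
    (int_abs_deriv h).mono_set hIsub
  have hintP : IntegrableOn (fun t => |φ t|) (Icc m (m+1)) :=
    (int_abs_phi h).mono_set hIsub
  have hintC : IntegrableOn (fun _ : ℝ => C) (Icc m (m+1)) := by
    refine (integrableOn_const_iff).mpr (Or.inr ?_)
    rw [Real.volume_Icc]; exact ENNReal.ofReal_lt_top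
  have bd : ∀ u v : ℝ, u ∈ Icc m (m+1) → v ∈ Icc m (m+1) → u ≤ v → |φ v - φ u| ≤ C := by
    intro u v hu hv huv
    have hsub2 : Icc u v ⊆ {(0:ℝ)}ᶜ := fun t ht =>
      hI0 ⟨le_trans hu.1 ht.1, le_trans ht.2 hv.2⟩
    refine (ftc h huv hsub2).trans ?_
    refine setIntegral_mono_set hintD (ae_of_all _ fun t => abs_nonneg _) ?_
    refine HasSubset.Subset.eventuallyLE ?_
    exact fun t ht => ⟨le_trans hu.1 (le_of_lt ht.1), le_trans ht.2 hv.2⟩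
  have key : ∀ z ∈ Icc m (m+1), |φ y| ≤ |φ z| + C := by
    intro z hz
    rcases le_total z y with hzy|hyz
    · have h1 := bd z y hz hy hzy
      have h2 : |φ y| ≤ |φ z| + |φ y - φ z| := by
        have := abs_add_le (φ z) (φ y - φ z); simpa using this
      linarith
    · have h1 := bd y z hy hz hyz
      have h2 : |φ y| ≤ |φ z| + |φ z - φ y| := by
        have := abs_sub_abs_le_abs_sub (φ y) (φ z)
        have h3 := abs_sub_comm (φ y) (φ z)
        linarith [abs_sub_abs_le_abs_sub (φ y) (φ z), abs_sub_comm (φ y) (φ z)]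
      linarith
  have hvol : (volume (Icc m (m+1))).toReal = 1 := by
    rw [Real.volume_Icc]; norm_num
  calc |φ y| = ∫ _z in Icc m (m+1), |φ y| := by
        rw [setIntegral_const, measureReal_def, hvol, one_smul]
    _ ≤ ∫ z in Icc m (m+1), (|φ z| + C) := by
        refine setIntegral_mono_on ?_ (hintP.add hintC) measurableSet_Icc key
        refine (integrableOn_const_iff).mpr (Or.inr ?_)
        rw [Real.volume_Icc]; exact ENNReal.ofReal_lt_top
    _ = (∫ z in Icc m (m+1), |φ z|) + C := by
        rw [integral_add hintP hintC, setIntegral_const, measureReal_def, hvol, one_smul]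
    _ = ∫ t in Icc m (m+1), (|φ t| + |deriv φ t|) := by
        rw [integral_add hintP hintD]


lemma main_pos (h : A12 φ α a₀ c₁ c₂) {x r₀ : ℝ} (hr₀pos : 0 < r₀) (hr₀a : r₀ ≤ a₀)
    (hrx : r₀ ≤ x) (hx2 : x ≤ 1/2) :
    |phiS φ x| ≤ c₁ * r₀ ^ (-(1+α)) + c₂ * (1 + a₀⁻¹) := by
  have ha : (0:ℝ) < a₀ := h.a₀pos
  have ha2 : a₀ ≤ 1/2 := h.a₀le
  have hx0 : 0 < x := lt_of_lt_of_le hr₀pos hrx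
  have hc₁ : (0:ℝ) < c₁ := lt_of_lt_of_le one_pos h.c₁ge
  set T : Set ℝ := {x : ℝ | a₀ ≤ |x|} with hT
  set g : ℝ → ℝ := fun t => |φ t| + |deriv φ t| with hg
  have hgint : IntegrableOn g T := (int_abs_phi h).add (int_abs_deriv h)
  have hgnn : ∀ t, 0 ≤ g t := fun t => add_nonneg (abs_nonneg _) (abs_nonneg _)
  have hgbd : (∫ t in T, g t) ≤ c₂ + a₀⁻¹ * c₂ := by
    rw [hg, integral_add (int_abs_phi h) (int_abs_deriv h)]
    exact add_le_add (intbd_abs_phi h) (intbd_abs_deriv h)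
  set aend : ℤ → ℝ := fun k => if 1 ≤ k then x + k else if k ≤ -1 then x + k - 1 else a₀
    with haend
  set bend : ℤ → ℝ := fun k => if 1 ≤ k then x + k + 1 else if k ≤ -1 then x + k else max a₀ x
    with hbend
  set J : ℤ → Set ℝ := fun k => Ioc (aend k) (bend k) with hJ
  have epos : ∀ m : ℤ, 1 ≤ m → aend m = x + m ∧ bend m = x + m + 1 := by
    intro m hm
    constructor <;> simp only [haend, hbend] <;> rw [if_pos hm]
  have eneg : ∀ m : ℤ, m ≤ -1 → aend m = x + m - 1 ∧ bend m = x + m := by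
    intro m hm
    constructor <;> simp only [haend, hbend] <;>
      rw [if_neg (by omega : ¬ (1:ℤ) ≤ m), if_pos hm]
  have ezero : aend 0 = a₀ ∧ bend 0 = max a₀ x := by
    constructor <;> simp [haend, hbend]
  have castpos : ∀ m : ℤ, 1 ≤ m → (1:ℝ) ≤ (m:ℝ) := by
    intro m hm; exact_mod_cast hm
  have castneg : ∀ m : ℤ, m ≤ -1 → (m:ℝ) ≤ -1 := by
    intro m hm; exact_mod_cast hm
  have horder : ∀ k l : ℤ, k < l → bend k ≤ aend l := by
    intro k l hkl
    have hkl1 : (k:ℝ) + 1 ≤ (l:ℝ) := by exact_mod_cast hkl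
    rcases lt_trichotomy k 0 with hk|hk|hk <;> rcases lt_trichotomy l 0 with hl|hl|hl
    · rw [(eneg k (by omega)).2, (eneg l (by omega)).1]; linarith
    · subst hl; rw [(eneg k (by omega)).2, ezero.1]
      have := castneg k (by omega); linarith
    · rw [(eneg k (by omega)).2, (epos l (by omega)).1]; linarith
    · omega
    · omega
    · subst hk; rw [ezero.2, (epos l (by omega)).1]
      have := castpos l (by omega)
      exact max_le (by linarith) (by linarith)
    · omega
    · omega
    · rw [(epos k (by omega)).2, (epos l (by omega)).1]; linarith
  have hJsub : ∀ k, J k ⊆ T := by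
    intro k t ht
    simp only [hJ, haend, hbend, mem_Ioc] at ht
    simp only [hT, mem_setOf_eq]
    split_ifs at ht with h1 h2
    · have : (1:ℝ) ≤ (k:ℝ) := by exact_mod_cast h1
      rw [abs_of_pos (by linarith [ht.1])]
      linarith [ht.1]
    · have : (k:ℝ) ≤ -1 := castneg k h2
      rw [abs_of_neg (by linarith [ht.2])]
      linarith [ht.2]
    · rw [abs_of_pos (by linarith [ht.1])]
      linarith [ht.1]
  have hJint : ∀ k, IntegrableOn g (J k) := fun k => hgint.mono_set (hJsub k)
  have hJnn : ∀ k, 0 ≤ ∫ t in J k, g t := fun k =>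
    setIntegral_nonneg measurableSet_Ioc (fun t _ => hgnn t)
  have hsum : ∀ s : Finset ℤ, (∑ k ∈ s, ∫ t in J k, g t) ≤ c₂ + a₀⁻¹ * c₂ := by
    intro s
    have hdisj : (↑s : Set ℤ).Pairwise (Function.onFun Disjoint J) := by
      intro k _ l _ hkl
      simp only [Function.onFun, hJ]
      rw [Set.Ioc_disjoint_Ioc]
      rcases lt_or_gt_of_ne hkl with hlt|hlt
      · exact le_trans (min_le_left _ _) (le_trans (horder k l hlt) (le_max_right _ _))
      · exact le_trans (min_le_right _ _) (le_trans (horder l k hlt) (le_max_left _ _))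
    rw [← integral_biUnion_finset s (fun i _ => measurableSet_Ioc) hdisj
      (fun i _ => hJint i)]
    refine le_trans (setIntegral_mono_set hgint (ae_of_all _ hgnn)
      (HasSubset.Subset.eventuallyLE (iUnion₂_subset fun i _ => hJsub i))) hgbd
  set C0 := c₁ * r₀ ^ (-(1+α)) with hC0
  have hC0nn : 0 ≤ C0 := by positivity
  have h1α : -(1+α) ≤ 0 := by linarith [h.αpos]
  have hterm : ∀ k : ℤ, |φ (x + k)| ≤ (if k = 0 then C0 else 0) + ∫ t in J k, g t := by
    intro k
    rcases lt_trichotomy k 0 with hk|hk|hk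
    · -- k ≤ -1
      have hk1 : (k:ℝ) ≤ -1 := castneg k (by omega)
      rw [if_neg (by omega), zero_add]
      have hJeq : J k = Ioc (x + k - 1) (x + k) := by
        simp only [hJ, (eneg k (by omega)).1, (eneg k (by omega)).2]
      have hmem : x + (k:ℝ) ∈ Icc (x + k - 1) ((x + k - 1) + 1) := by
        constructor <;> simp <;> linarith
      have hib := interval_bound h (m := x + k - 1) (Or.inr (by linarith)) hmem
      rw [integral_Icc_eq_integral_Ioc] at hib
      rw [show x + (k:ℝ) - 1 + 1 = x + k by ring] at hib
      rw [hJeq]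
      exact hib
    · -- k = 0
      subst hk
      rw [if_pos rfl]
      have hJ0 : J 0 = Ioc a₀ (max a₀ x) := by
        simp only [hJ, ezero.1, ezero.2]
      rw [hJ0]
      simp only [Int.cast_zero, add_zero]
      rcases le_or_gt x a₀ with hxa|hxa
      · have hφx : 0 ≤ φ x := le_trans (by positivity) (h.lower x (ne_of_gt hx0)
          (by rw [abs_of_pos hx0]; exact hxa))
        have h2 : φ x ≤ c₁ * x ^ (-(1+α)) := by
          have := h.upper x (ne_of_gt hx0) (by rw [abs_of_pos hx0]; exact hxa)
          rwa [abs_of_pos hx0] at this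
        have h3 : x ^ (-(1+α)) ≤ r₀ ^ (-(1+α)) := rpow_le_rpow_of_nonpos hr₀pos hrx h1α
        have h4 : |φ x| ≤ C0 := by
          rw [abs_of_nonneg hφx, hC0]
          exact le_trans h2 (mul_le_mul_of_nonneg_left h3 (le_of_lt hc₁))
        have h5 : 0 ≤ ∫ t in Ioc a₀ (max a₀ x), g t :=
          setIntegral_nonneg measurableSet_Ioc (fun t _ => hgnn t)
        linarith
      · rw [max_eq_right (le_of_lt hxa)]
        have hsub : Icc a₀ x ⊆ {(0:ℝ)}ᶜ := by
          intro t ht; simp only [mem_compl_iff, mem_singleton_iff]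
          intro h0; rw [h0] at ht; exact absurd ht.1 (by linarith)
        have hftc := ftc h (le_of_lt hxa) hsub
        have hφa : 0 ≤ φ a₀ := le_trans (by positivity) (h.lower a₀ (ne_of_gt ha)
          (by rw [abs_of_pos ha]))
        have h2 : φ a₀ ≤ c₁ * a₀ ^ (-(1+α)) := by
          have := h.upper a₀ (ne_of_gt ha) (by rw [abs_of_pos ha])
          rwa [abs_of_pos ha] at this
        have h3 : a₀ ^ (-(1+α)) ≤ r₀ ^ (-(1+α)) := rpow_le_rpow_of_nonpos hr₀pos hr₀a h1α
        have h4 : |φ a₀| ≤ C0 := by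
          rw [abs_of_nonneg hφa, hC0]
          exact le_trans h2 (mul_le_mul_of_nonneg_left h3 (le_of_lt hc₁))
        have hIsub : Ioc a₀ x ⊆ T := by
          intro t ht; simp only [hT, mem_setOf_eq]
          rw [abs_of_pos (by linarith [ht.1])]; linarith [ht.1]
        have h5 : (∫ t in Ioc a₀ x, |deriv φ t|) ≤ ∫ t in Ioc a₀ x, g t := by
          refine setIntegral_mono_on ((int_abs_deriv h).mono_set hIsub)
            (hgint.mono_set hIsub) measurableSet_Ioc (fun t _ => ?_)
          simp only [hg]; linarith [abs_nonneg (φ t)]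
        have h6 : |φ x| ≤ |φ a₀| + |φ x - φ a₀| := by
          have := abs_add_le (φ a₀) (φ x - φ a₀); simpa using this
        linarith
    · -- 1 ≤ k
      have hk1 : (1:ℝ) ≤ (k:ℝ) := castpos k (by omega)
      rw [if_neg (by omega), zero_add]
      have hJeq : J k = Ioc (x + k) (x + k + 1) := by
        simp only [hJ, (epos k (by omega)).1, (epos k (by omega)).2]
      have hmem : x + (k:ℝ) ∈ Icc (x + k) ((x + k) + 1) := by
        constructor <;> simp <;> linarith
      have := interval_bound h (m := x + k) (Or.inl (by linarith)) hmem
      rw [integral_Icc_eq_integral_Ioc] at this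
      rw [hJeq]
      exact this
  have hJsum : Summable (fun k : ℤ => ∫ t in J k, g t) :=
    summable_of_sum_le hJnn hsum
  have hind : Summable (fun k : ℤ => if k = 0 then C0 else 0) := by
    refine summable_of_ne_finset_zero (s := {0}) (fun k hk => ?_)
    simp only [Finset.mem_singleton] at hk
    simp [hk]
  have hB : Summable (fun k : ℤ => (if k = 0 then C0 else 0) + ∫ t in J k, g t) :=
    hind.add hJsum
  have habs : Summable (fun k : ℤ => |φ (x + k)|) :=
    Summable.of_nonneg_of_le (fun k => abs_nonneg _) hterm hB
  calc |phiS φ x| ≤ ∑' k : ℤ, |φ (x + k)| := by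
        have := norm_tsum_le_tsum_norm (f := fun k : ℤ => φ (x + k)) (by simpa using habs)
        simpa [phiS] using this
    _ ≤ ∑' k : ℤ, ((if k = 0 then C0 else 0) + ∫ t in J k, g t) :=
        Summable.tsum_le_tsum hterm habs hB
    _ = C0 + ∑' k : ℤ, ∫ t in J k, g t := by
        rw [Summable.tsum_add hind hJsum, tsum_ite_eq]
    _ ≤ C0 + (c₂ + a₀⁻¹ * c₂) :=
        add_le_add_right (Summable.tsum_le_of_sum_le hJsum hsum) _
    _ = c₁ * r₀ ^ (-(1+α)) + c₂ * (1 + a₀⁻¹) := by rw [hC0]; ring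

lemma phiS_neg (heven : ∀ x : ℝ, φ (-x) = φ x) (x : ℝ) : phiS φ (-x) = phiS φ x := by
  unfold phiS
  rw [← (Equiv.neg ℤ).tsum_eq (fun k : ℤ => φ (x + k))]
  refine tsum_congr fun k => ?_
  simp only [Equiv.neg_apply, Int.cast_neg]
  rw [show (-x + (k:ℝ)) = -(x + -(k:ℝ)) by ring, heven]

end S2

end Stmt2Aux

/-- Under (A1)–(A2), the periodized influence function
`φ^S(x) = ∑_{k∈ℤ} φ(x+k)` satisfies `|φ^S(x)| ≤ c₃` for `r₀ ≤ |x| ≤ 1/2`,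
where `r₀ = min{a₀, (6c₁c₂)^{-1/(1+α)}}` and `c₃ = c₁ r₀^{-(1+α)} + c₂ (1 + a₀⁻¹)`. -/


theorem stmt2 (φ : ℝ → ℝ) (α a₀ c₁ c₂ : ℝ) (h : A12 φ α a₀ c₁ c₂) :
    ∀ x : ℝ, min a₀ ((6 * c₁ * c₂) ^ (-(1 + α)⁻¹)) ≤ |x| → |x| ≤ 1/2 →
      |phiS φ x| ≤
        c₁ * (min a₀ ((6 * c₁ * c₂) ^ (-(1 + α)⁻¹))) ^ (-(1 + α)) + c₂ * (1 + a₀⁻¹) := by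
  intro x hx1 hx2
  set r₀ := min a₀ ((6 * c₁ * c₂) ^ (-(1 + α)⁻¹)) with hr₀
  have hc₁ : (0:ℝ) < c₁ := lt_of_lt_of_le one_pos h.c₁ge
  have hc₂ := h.c₂pos
  have h6 : (0:ℝ) < 6 * c₁ * c₂ := by positivity
  have hr₀pos : 0 < r₀ := lt_min h.a₀pos (Real.rpow_pos_of_pos h6 _)
  have hr₀a : r₀ ≤ a₀ := min_le_left _ _
  rcases lt_trichotomy x 0 with hx|hx|hx
  · have hxabs : |x| = -x := abs_of_neg hx
    rw [hxabs] at hx1 hx2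
    rw [← S2.phiS_neg h.even x]
    exact S2.main_pos h hr₀pos hr₀a hx1 hx2
  · exfalso
    rw [hx] at hx1
    simp at hx1
    linarith
  · have hxabs : |x| = x := abs_of_pos hx
    rw [hxabs] at hx1 hx2
    exact S2.main_pos h hr₀pos hr₀a hx1 hx2
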